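/- Under the stated hypotheses, if M ⊆ X′ is a closed linear subspace with M ≠ {0} which is invariant under the adjoint S′ (i.e., S′(M) ⊆ M), then σ(S) ⊆ σ(S′|_M) ⊆ η(σ(S)), where S′|_M is the restriction of S′ to M and η(K) denotes the full spectrum of K, i.e., the union of K with all bounded connected components of ℂ∖K. -/

import Mathlib

/-- The adjoint of `S` acting on the continuous dual: `(dualOp S φ) x = φ (S x)`. -/
noncomputable def dualOp {X : Type*} [NormedAddCommGroup X] [NormedSpace ℂ X]
    (S : X →L[ℂ] X) : (X →L[ℂ] ℂ) →L[ℂ] (X →L[ℂ] ℂ) :=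
  (ContinuousLinearMap.compL ℂ X X ℂ).flip S

/-- Restriction of an operator to an invariant subspace. -/
noncomputable def restrictOp {X : Type*} [NormedAddCommGroup X] [NormedSpace ℂ X]
    (T : X →L[ℂ] X) (M : Submodule ℂ X) (h : ∀ y ∈ M, T y ∈ M) : M →L[ℂ] M where
  toLinearMap := T.toLinearMap.restrict h
  cont := Continuous.subtype_mk (T.continuous.comp continuous_subtype_val) _

/-- The full spectrum `η(K)`: the union of `K` with all bounded connected components
of `ℂ ∖ K`. -/
def fullSpectrum (K : Set ℂ) : Set ℂ :=
  K ∪ {z | z ∉ K ∧ Bornology.IsBounded (connectedComponentIn Kᶜ z)}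

/-! For a nonzero `φ ∈ M`, the scalar function `w ↦ φ (f w)` is analytic and not identically zero
on `G`, so its nonzeros are dense in `G`. At such a `w`, `Φ w` cannot be in the resolvent set of
`S′|_M`: otherwise `φ = (Φ w - S′) χ` for some `χ ∈ M`, and then
`φ (f w) = χ ((Φ w - S) (f w)) = 0`. Hence `σ(S) ⊆ closure Φ(G) ⊆ σ(S′|_M)`.

For the other inclusion, `S′|_M` is the image of `S′` under the restriction homomorphism out of
the closed algebra of operators leaving `M` invariant. The spectrum relative to a closed
subalgebra only adds bounded components of the complement of the spectrum in the ambient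
algebra, and `σ(S′) ⊆ σ(S)`. -/

open ContinuousLinearMap Set

theorem AnalyticOnNhd.subset_closure_setOf_ne_zero {𝕜 E : Type*} [NontriviallyNormedField 𝕜]
    [NormedAddCommGroup E] [NormedSpace 𝕜 E] {g : 𝕜 → E} {U : Set 𝕜}
    (hg : AnalyticOnNhd 𝕜 g U) (hUo : IsOpen U) (hU : IsPreconnected U) (hg0 : ¬EqOn g 0 U) :
    U ⊆ closure {z ∈ U | g z ≠ 0} := by
  intro w hw
  by_contra hcl
  refine hg0 (hg.eqOn_zero_of_preconnected_of_eventuallyEq_zero hU hw ?_)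
  filter_upwards [hUo.mem_nhds hw, isClosed_closure.isOpen_compl.mem_nhds hcl] with z hzU hz
  by_contra hgz
  exact hz (subset_closure ⟨hzU, hgz⟩)

theorem ContinuousLinearMap.exists_apply_ne_zero_of_dense_span {𝕜 E F : Type*}
    [NontriviallyNormedField 𝕜] [NormedAddCommGroup E] [NormedSpace 𝕜 E]
    [NormedAddCommGroup F] [NormedSpace 𝕜 F] {s : Set E}
    (hs : Dense (Submodule.span 𝕜 s : Set E)) {φ : E →L[𝕜] F} (hφ : φ ≠ 0) :
    ∃ x ∈ s, φ x ≠ 0 := by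
  by_contra! h
  exact hφ (ContinuousLinearMap.ext_on hs h)

theorem fullSpectrum_mono {K L : Set ℂ} (h : K ⊆ L) : fullSpectrum K ⊆ fullSpectrum L := by
  rintro z (hzK | ⟨-, hb⟩)
  · exact Or.inl (h hzK)
  · by_cases hzL : z ∈ L
    · exact Or.inl hzL
    · exact Or.inr ⟨hzL, hb.subset (connectedComponentIn_mono z (compl_subset_compl.2 h))⟩

section Invariant

variable {E : Type*} [NormedAddCommGroup E] [NormedSpace ℂ E]

def invtSubalgebra (M : Submodule ℂ E) : Subalgebra ℂ (E →L[ℂ] E) where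
  carrier := {T | ∀ y ∈ M, T y ∈ M}
  mul_mem' hA hB y hy := hA _ (hB y hy)
  add_mem' hA hB y hy := M.add_mem (hA y hy) (hB y hy)
  algebraMap_mem' c y hy := by
    rw [Algebra.algebraMap_eq_smul_one]
    exact M.smul_mem c hy

theorem mem_invtSubalgebra {M : Submodule ℂ E} {T : E →L[ℂ] E} :
    T ∈ invtSubalgebra M ↔ ∀ y ∈ M, T y ∈ M := Iff.rfl

theorem isClosed_invtSubalgebra {M : Submodule ℂ E} (hM : IsClosed (M : Set E)) :
    IsClosed (invtSubalgebra M : Set (E →L[ℂ] E)) := by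
  have : (invtSubalgebra M : Set (E →L[ℂ] E)) = ⋂ y ∈ M, (fun T : E →L[ℂ] E => T y) ⁻¹' M := by
    ext T; simp [mem_invtSubalgebra]
  rw [this]
  exact isClosed_biInter fun y _ => hM.preimage (apply ℂ E y).continuous

noncomputable def restrictAlgHom (M : Submodule ℂ E) : invtSubalgebra M →ₐ[ℂ] (M →L[ℂ] M) where
  toFun T := restrictOp T M (mem_invtSubalgebra.1 T.2)
  map_one' := rfl
  map_mul' _ _ := rfl
  map_zero' := rfl
  map_add' _ _ := rfl
  commutes' _ := rfl

theorem restrictAlgHom_apply (M : Submodule ℂ E) (T : invtSubalgebra M) :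
    restrictAlgHom M T = restrictOp T M (mem_invtSubalgebra.1 T.2) := rfl

theorem spectrum_restrictOp_subset_fullSpectrum [CompleteSpace E] (T : E →L[ℂ] E)
    {M : Submodule ℂ E} (hM : IsClosed (M : Set E)) (h : ∀ y ∈ M, T y ∈ M) :
    spectrum ℂ (restrictOp T M h) ⊆ fullSpectrum (spectrum ℂ T) := by
  have := isClosed_invtSubalgebra hM
  intro z hz
  have hz' := AlgHom.spectrum_apply_subset (restrictAlgHom M) ⟨T, h⟩
    (by rwa [restrictAlgHom_apply])
  by_cases hzT : z ∈ spectrum ℂ T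
  · exact Or.inl hzT
  · exact Or.inr ⟨hzT,
      Subalgebra.spectrum_isBounded_connectedComponentIn (invtSubalgebra M) ⟨T, h⟩ hz'⟩

end Invariant

section Adjoint

variable {X : Type*} [NormedAddCommGroup X] [NormedSpace ℂ X]

theorem dualOp_apply (S : X →L[ℂ] X) (φ : X →L[ℂ] ℂ) (x : X) : dualOp S φ x = φ (S x) := rfl

theorem dualOp_mul (A B : X →L[ℂ] X) : dualOp (A * B) = dualOp B * dualOp A := rfl

theorem dualOp_one : dualOp (1 : X →L[ℂ] X) = 1 := rfl

theorem dualOp_smul_one_sub (S : X →L[ℂ] X) (z : ℂ) :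
    dualOp (z • 1 - S) = z • 1 - dualOp S := by
  ext φ x
  simp only [dualOp_apply, sub_apply, smul_apply, map_sub, map_smul]
  rfl

theorem isUnit_dualOp {A : X →L[ℂ] X} (hA : IsUnit A) : IsUnit (dualOp A) := by
  obtain ⟨u, rfl⟩ := hA
  exact isUnit_iff_exists.2 ⟨dualOp ↑u⁻¹, by rw [← dualOp_mul, u.inv_mul, dualOp_one],
    by rw [← dualOp_mul, u.mul_inv, dualOp_one]⟩

theorem spectrum_dualOp_subset (S : X →L[ℂ] X) : spectrum ℂ (dualOp S) ⊆ spectrum ℂ S := by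
  intro z hz hS
  apply hz
  rw [spectrum.mem_resolventSet_iff, Algebra.algebraMap_eq_smul_one] at hS ⊢
  rw [← dualOp_smul_one_sub]
  exact isUnit_dualOp hS

theorem apply_eq_zero_of_mem_resolventSet_restrictOp_dualOp {S : X →L[ℂ] X}
    {M : Submodule ℂ (X →L[ℂ] ℂ)} (hM : ∀ φ ∈ M, dualOp S φ ∈ M) {c : ℂ} {x : X}
    (hx : S x = c • x) (hc : c ∈ resolventSet ℂ (restrictOp (dualOp S) M hM)) {φ : X →L[ℂ] ℂ}
    (hφ : φ ∈ M) : φ x = 0 := by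
  obtain ⟨u, hu⟩ := spectrum.mem_resolventSet_iff.1 hc
  set χ : M := (↑u⁻¹ : M →L[ℂ] M) ⟨φ, hφ⟩
  have hχ : (u : M →L[ℂ] M) χ = ⟨φ, hφ⟩ := congr($(u.mul_inv) ⟨φ, hφ⟩)
  calc φ x = ((u : M →L[ℂ] M) χ : X →L[ℂ] ℂ) x := by rw [hχ]
    _ = c * (χ : X →L[ℂ] ℂ) x - (χ : X →L[ℂ] ℂ) (S x) := by rw [hu]; rfl
    _ = 0 := by rw [hx, map_smul, smul_eq_mul, sub_self]

theorem spectrum_subset_spectrum_restrictOp_dualOp {S : X →L[ℂ] X} {G : Set ℂ} (hG : IsOpen G)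
    (hGconn : IsPreconnected G) {Φ : ℂ → ℂ} (hΦ : ContinuousOn Φ G) {f : ℂ → X}
    (hf : DifferentiableOn ℂ f G) (heig : ∀ w ∈ G, S (f w) = Φ w • f w)
    (hdense : Dense (Submodule.span ℂ (f '' G) : Set X))
    (hspec : spectrum ℂ S ⊆ closure (Φ '' G)) {M : Submodule ℂ (X →L[ℂ] ℂ)} [CompleteSpace M]
    (hMne : M ≠ ⊥) (hM : ∀ φ ∈ M, dualOp S φ ∈ M) :
    spectrum ℂ S ⊆ spectrum ℂ (restrictOp (dualOp S) M hM) := by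
  obtain ⟨φ, hφM, hφ0⟩ := Submodule.exists_mem_ne_zero_of_ne_bot hMne
  obtain ⟨_, ⟨w₀, hw₀, rfl⟩, hφw₀⟩ := φ.exists_apply_ne_zero_of_dense_span hdense hφ0
  set Z := {w ∈ G | φ (f w) ≠ 0}
  have hGZ : G ⊆ closure Z :=
    ((φ.differentiable.comp_differentiableOn hf).analyticOnNhd hG).subset_closure_setOf_ne_zero
      hG hGconn fun h => hφw₀ (h hw₀)
  have hZ : Φ '' Z ⊆ spectrum ℂ (restrictOp (dualOp S) M hM) := by
    rintro _ ⟨w, ⟨hw, hφw⟩, rfl⟩ hΦw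
    exact hφw (apply_eq_zero_of_mem_resolventSet_restrictOp_dualOp hM (heig w hw) hΦw hφM)
  calc spectrum ℂ S ⊆ closure (Φ '' G) := hspec
    _ ⊆ closure (Φ '' Z) := closure_minimal (image_subset_iff.2 fun w hw =>
        mem_closure_image (hΦ.continuousAt (hG.mem_nhds hw)) (hGZ hw)) isClosed_closure
    _ ⊆ spectrum ℂ (restrictOp (dualOp S) M hM) :=
        closure_minimal hZ (spectrum.isClosed (𝕜 := ℂ) (restrictOp (dualOp S) M hM))

end Adjoint

theorem stmt_9_general (X : Type*) [NormedAddCommGroup X] [NormedSpace ℂ X] [CompleteSpace X]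
    (S : X →L[ℂ] X)
    (G : Set ℂ) (hG : IsOpen G) (hGconn : IsConnected G)
    (Φ : ℂ → ℂ) (hΦ : DifferentiableOn ℂ Φ G)
    (f : ℂ → X) (hf : DifferentiableOn ℂ f G)
    (heig : ∀ w ∈ G, S (f w) = Φ w • f w)
    (hdense : Dense (Submodule.span ℂ (f '' G) : Set X))
    (hspec : spectrum ℂ S ⊆ closure (Φ '' G))
    (M : Submodule ℂ (X →L[ℂ] ℂ)) (hMclosed : IsClosed (M : Set (X →L[ℂ] ℂ)))
    (hMne : M ≠ ⊥) (hMinv : ∀ φ ∈ M, dualOp S φ ∈ M) :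
    spectrum ℂ S ⊆ spectrum ℂ (restrictOp (dualOp S) M hMinv) ∧
    spectrum ℂ (restrictOp (dualOp S) M hMinv) ⊆ fullSpectrum (spectrum ℂ S) := by
  have : CompleteSpace M := hMclosed.completeSpace_coe
  refine ⟨spectrum_subset_spectrum_restrictOp_dualOp hG hGconn.isPreconnected hΦ.continuousOn hf
    heig hdense hspec hMne hMinv, ?_⟩
  calc spectrum ℂ (restrictOp (dualOp S) M hMinv)
      ⊆ fullSpectrum (spectrum ℂ (dualOp S)) :=
        spectrum_restrictOp_subset_fullSpectrum _ hMclosed hMinv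
    _ ⊆ fullSpectrum (spectrum ℂ S) := fullSpectrum_mono (spectrum_dualOp_subset S)

/-- under the eigenvector-family hypotheses, if `M ≠ {0}` is a closed
subspace of `X′` invariant under the adjoint `S′`, then
`σ(S) ⊆ σ(S′|_M) ⊆ η(σ(S))`. -/
theorem stmt_9 (X : Type*) [NormedAddCommGroup X] [NormedSpace ℂ X] [CompleteSpace X]
    (S : X →L[ℂ] X)
    (G : Set ℂ) (hG : IsOpen G) (hGne : G.Nonempty) (hGconn : IsConnected G)
    (Φ : ℂ → ℂ) (hΦ : DifferentiableOn ℂ Φ G) (hΦnc : ∃ a ∈ G, ∃ b ∈ G, Φ a ≠ Φ b)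
    (f : ℂ → X) (hf : DifferentiableOn ℂ f G)
    (hfne : ∀ w ∈ G, f w ≠ 0) (heig : ∀ w ∈ G, S (f w) = Φ w • f w)
    (hdense : Dense (Submodule.span ℂ (f '' G) : Set X))
    (hspec : spectrum ℂ S ⊆ closure (Φ '' G))
    (M : Submodule ℂ (X →L[ℂ] ℂ)) (hMclosed : IsClosed (M : Set (X →L[ℂ] ℂ)))
    (hMne : M ≠ ⊥) (hMinv : ∀ φ ∈ M, dualOp S φ ∈ M) :
    spectrum ℂ S ⊆ spectrum ℂ (restrictOp (dualOp S) M hMinv) ∧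
    spectrum ℂ (restrictOp (dualOp S) M hMinv) ⊆ fullSpectrum (spectrum ℂ S) :=
  stmt_9_general X S G hG hGconn Φ hΦ f hf heig hdense hspec M hMclosed hMne hMinv
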